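/- With notation as above (W₁' = W₁Ω₁ where Ω₁ fixes S₁, W_{1,2} = W₁ ∩ W₂): if σ ∈ W₁' is of minimal length in its double coset W_{1,2}σW_{1,2}, then σ is of minimal length in its double coset W₂σW₂; that is, ℓ(w₂ σ w₂') ≥ ℓ(σ) for all w₂, w₂' ∈ W₂. -/

import Mathlib

/-!
Write `σ = (u, ρ)`. Then `u ∈ W₁`, `ρ ∈ Ω₁`, and `ℓ(w₂ σ w₂') = ℓ(w₂ u ρ(w₂'))`; since `ρ`
preserves lengths it permutes the simple reflections, so `ρ(W₂) = W_K` is again standard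
parabolic. By the deletion condition, a simple reflection `s` with `ℓ(s u) < ℓ(u)` lies in `W₁`;
if moreover `s ∈ W₂` then `s ∈ W_{1,2}`, contradicting the minimality of `σ`. The same holds on
the right with `W_K`. So `u` has no left descent in `W₂` and no right descent in `W_K`, and such
an element is minimal in `W₂ u W_K`: for `a ∈ W₂`, `b ∈ W_K` we have `ℓ(u b) = ℓ(u) + ℓ(b)`, so
`u` is a subword `π(A ++ Y)` of `α ++ μ`, where `α` is a word in `S₂` for `a⁻¹` and `μ` a reduced
word for `a u b`; then `ℓ(a u b) ≥ |Y| ≥ ℓ((π A)⁻¹ u) ≥ ℓ(u)`.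

The exchange condition itself comes from Tits' permutation representation of `W` on
`W × ZMod 2`.
-/

open SemidirectProduct

namespace CoxeterSystem

open List

variable {B : Type*} {M : CoxeterMatrix B} {W : Type*} [Group W] (cs : CoxeterSystem M W)

local prefix:100 "s" => cs.simple
local prefix:100 "π" => cs.wordProd
local prefix:100 "ℓ" => cs.length
local prefix:100 "ris" => cs.rightInvSeq
local prefix:100 "lis" => cs.leftInvSeq

theorem alternatingWord_two_mul_succ (i i' : B) (m : ℕ) :
    alternatingWord i i' (2 * (m + 1)) = i :: i' :: alternatingWord i i' (2 * m) := by
  rw [show 2 * (m + 1) = 2 * m + 1 + 1 by ring, alternatingWord_succ', alternatingWord_succ']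
  simp

theorem reverse_alternatingWord_two_mul (i i' : B) (m : ℕ) :
    (alternatingWord i i' (2 * m)).reverse = alternatingWord i' i (2 * m) := by
  induction m with
  | zero => rfl
  | succ m ih =>
    rw [show 2 * (m + 1) = 2 * m + 1 + 1 by ring, alternatingWord_succ, alternatingWord_succ,
      alternatingWord_succ' i' i, alternatingWord_succ' i' i]
    simp [ih]

theorem prod_map_alternatingWord_two_mul {G : Type*} [Monoid G] (f : B → G) (i i' : B) (m : ℕ) :
    ((alternatingWord i i' (2 * m)).map f).prod = (f i * f i') ^ m := by
  induction m with
  | zero => simp [alternatingWord]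
  | succ m ih => rw [alternatingWord_two_mul_succ, map_cons, map_cons, prod_cons, prod_cons, ih,
      pow_succ', mul_assoc]

theorem leftInvSeq_alternatingWord_two_mul (i i' : B) (m : ℕ) :
    lis (alternatingWord i i' (2 * m)) = (range (2 * m)).map fun k ↦ s i * (s i' * s i) ^ k := by
  refine ext_getElem (by simp) fun k h _ ↦ ?_
  rw [getElem_leftInvSeq_alternatingWord cs i i' m k (by simpa using h),
    prod_alternatingWord_eq_mul_pow]
  simp [show (2 * k + 1) / 2 = k by omega]

section Tits

variable [DecidableEq W]

theorem even_count_rightInvSeq_alternatingWord (i i' : B) (t : W) :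
    Even ((ris (alternatingWord i i' (2 * M i i'))).count t) := by
  rw [← reverse_alternatingWord_two_mul, rightInvSeq_reverse, count_reverse,
    leftInvSeq_alternatingWord_two_mul, two_mul, range_add, map_append, map_map]
  have hperiodic : ((fun k ↦ s i' * (s i * s i') ^ k) ∘ (M i i' + ·)) =
      fun k ↦ s i' * (s i * s i') ^ k := by
    funext k
    simp [pow_add, simple_mul_simple_pow]
  rw [hperiodic, count_append]
  exact ⟨_, rfl⟩

/-- Acting with `π ω` on `(t, 0)` records in the second coordinate the parity of the number of
occurrences of `t` in `ris ω` (`prod_map_titsPerm_apply`); that this parity depends only on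
`π ω` is what makes the exchange condition work. -/
def titsPerm (i : B) : Equiv.Perm (W × ZMod 2) :=
  Function.Involutive.toPerm (fun p ↦ (s i * p.1 * s i, p.2 + if p.1 = s i then 1 else 0))
    fun ⟨w, ε⟩ ↦ by
      have hconj : s i * w * s i = s i ↔ w = s i := by
        constructor <;> intro h
        · simpa [mul_assoc] using congr_arg (s i * · * s i) h
        · simp [h]
      ext
      · simp [mul_assoc]
      · simp only [hconj, add_assoc]
        split_ifs <;> simp [CharTwo.add_self_eq_zero]

@[simp]
theorem titsPerm_apply (i : B) (w : W) (ε : ZMod 2) :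
    cs.titsPerm i (w, ε) = (s i * w * s i, ε + if w = s i then 1 else 0) :=
  rfl

theorem prod_map_titsPerm_apply (ω : List B) (t : W) (ε : ZMod 2) :
    (ω.map cs.titsPerm).prod (t, ε) = (π ω * t * (π ω)⁻¹, ε + (ris ω).count t) := by
  induction ω generalizing t ε with
  | nil => simp
  | cons i ω ih =>
    have hhit : π ω * t * (π ω)⁻¹ = s i ↔ (π ω)⁻¹ * s i * π ω = t := by
      constructor
      · intro h; rw [← h]; group
      · rintro rfl; group
    simp only [map_cons, prod_cons, Equiv.Perm.mul_apply, ih, titsPerm_apply, rightInvSeq,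
      count_cons, hhit, beq_iff_eq]
    ext
    · simp [wordProd_cons, mul_assoc]
    · split_ifs <;> simp [add_assoc]

theorem isLiftable_titsPerm : M.IsLiftable cs.titsPerm := by
  intro i i'
  ext ⟨t, ε⟩ : 1
  rw [← prod_map_alternatingWord_two_mul, prod_map_titsPerm_apply,
    (even_count_rightInvSeq_alternatingWord cs i i' t).natCast_zmod_two,
    prod_alternatingWord_eq_mul_pow]
  simp [simple_mul_simple_pow]

def titsHom : W →* Equiv.Perm (W × ZMod 2) :=
  cs.lift ⟨cs.titsPerm, cs.isLiftable_titsPerm⟩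

theorem titsHom_wordProd (ω : List B) : cs.titsHom (π ω) = (ω.map cs.titsPerm).prod := by
  have : ⇑cs.titsHom ∘ cs.simple = cs.titsPerm := funext (cs.lift_apply_simple _)
  rw [wordProd, map_list_prod, map_map, this]

theorem count_rightInvSeq_eq_of_wordProd_eq {ω ω' : List B} (h : π ω = π ω') (t : W) :
    ((ris ω).count t : ZMod 2) = (ris ω').count t := by
  have := congr_arg (fun w ↦ (cs.titsHom w (t, 0)).2) h
  simpa [titsHom_wordProd, prod_map_titsPerm_apply] using this

end Tits

/-- Compare `ω` with a reduced word for `π ω` ending in `k`: there `s k` occurs exactly once. -/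
theorem simple_mem_rightInvSeq_of_isRightDescent {ω : List B} {k : B}
    (h : cs.IsRightDescent (π ω) k) : s k ∈ ris ω := by
  classical
  obtain ⟨ν, hν, hνω⟩ := cs.exists_isReduced (π ω * s k)
  have hword : π (ν.concat k) = π ω := by
    rw [wordProd_concat, ← hνω, simple_mul_simple_cancel_right]
  have hnotin : s k ∉ ris ν := fun hmem ↦ by
    have hinv := (cs.isRightInversion_of_mem_rightInvSeq hν hmem).2
    rw [← hνω, simple_mul_simple_cancel_right] at hinv
    exact lt_asymm h hinv
  have hcount : (ris (ν.concat k)).count (s k) = 1 := by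
    have hconj := count_map_of_injective (ris ν) _ (MulAut.conj (s k)).injective (s k)
    rw [show MulAut.conj (s k) (s k) = s k by simp] at hconj
    rw [rightInvSeq_concat, concat_eq_append, count_append, hconj, count_eq_zero.mpr hnotin]
    simp
  rw [← count_pos_iff, Nat.pos_iff_ne_zero]
  intro hzero
  have := cs.count_rightInvSeq_eq_of_wordProd_eq hword (s k)
  rw [hcount, hzero] at this
  exact one_ne_zero (by exact_mod_cast this)

theorem exists_eraseIdx_of_isRightDescent {ω : List B} {k : B}
    (h : cs.IsRightDescent (π ω) k) : ∃ j < ω.length, π ω * s k = π (ω.eraseIdx j) := by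
  obtain ⟨j, hj, hjk⟩ := getElem_of_mem (cs.simple_mem_rightInvSeq_of_isRightDescent h)
  refine ⟨j, by simpa using hj, ?_⟩
  rw [← cs.wordProd_mul_getD_rightInvSeq, getD_eq_getElem _ _ hj, hjk]

theorem exists_sublist_of_isLeftDescent {ω : List B} {k : B}
    (h : cs.IsLeftDescent (π ω) k) : ∃ ω', ω'.Sublist ω ∧ s k * π ω = π ω' := by
  have hrev : cs.IsRightDescent (π ω.reverse) k := by
    rwa [wordProd_reverse, isRightDescent_inv_iff]
  obtain ⟨j, -, hj⟩ := cs.exists_eraseIdx_of_isRightDescent hrev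
  refine ⟨(ω.reverse.eraseIdx j).reverse, by simpa using (eraseIdx_sublist ω.reverse j).reverse, ?_⟩
  rw [wordProd_reverse, ← hj, wordProd_reverse]
  simp [inv_simple]

theorem mem_closure_simple_iff {J : Set B} {w : W} :
    w ∈ Subgroup.closure (cs.simple '' J) ↔ ∃ ω : List B, (∀ i ∈ ω, i ∈ J) ∧ π ω = w := by
  constructor
  · intro hw
    induction hw using Subgroup.closure_induction with
    | mem _ hx =>
      obtain ⟨i, hi, rfl⟩ := hx
      exact ⟨[i], by simpa using hi, by simp⟩
    | one => exact ⟨[], by simp, by simp⟩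
    | mul _ _ _ _ ihx ihy =>
      obtain ⟨ωx, hωx, rfl⟩ := ihx
      obtain ⟨ωy, hωy, rfl⟩ := ihy
      exact ⟨ωx ++ ωy, fun i hi ↦ (mem_append.mp hi).elim (hωx i) (hωy i), wordProd_append ..⟩
    | inv _ _ ih =>
      obtain ⟨ω, hω, rfl⟩ := ih
      exact ⟨ω.reverse, by simpa using hω, wordProd_reverse ..⟩
  · rintro ⟨ω, hω, rfl⟩
    refine Subgroup.list_prod_mem _ fun x hx ↦ ?_
    obtain ⟨i, hi, rfl⟩ := mem_map.mp hx
    exact Subgroup.subset_closure ⟨i, hω i hi, rfl⟩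

theorem simple_mem_closure_of_isLeftDescent {J : Set B} {w : W} {k : B}
    (hw : w ∈ Subgroup.closure (cs.simple '' J)) (h : cs.IsLeftDescent w k) :
    s k ∈ Subgroup.closure (cs.simple '' J) := by
  obtain ⟨ω, hωJ, rfl⟩ := cs.mem_closure_simple_iff.mp hw
  obtain ⟨ω', hsub, hω'⟩ := cs.exists_sublist_of_isLeftDescent h
  have hmem : s k * π ω ∈ Subgroup.closure (cs.simple '' J) :=
    hω' ▸ cs.mem_closure_simple_iff.mpr ⟨ω', fun i hi ↦ hωJ i (hsub.subset hi), rfl⟩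
  simpa using mul_mem hmem (inv_mem hw)

theorem simple_mem_closure_of_isRightDescent {J : Set B} {w : W} {k : B}
    (hw : w ∈ Subgroup.closure (cs.simple '' J)) (h : cs.IsRightDescent w k) :
    s k ∈ Subgroup.closure (cs.simple '' J) :=
  cs.simple_mem_closure_of_isLeftDescent (inv_mem hw) (cs.isLeftDescent_inv_iff.mpr h)

theorem isRightDescent_or_exists_length_lt_of_isRightDescent_mul {x y : W} {k : B}
    (h : cs.IsRightDescent (x * y) k) :
    cs.IsRightDescent y k ∨ ∃ x', ℓ x' < ℓ x ∧ x * y * s k = x' * y := by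
  obtain ⟨ξ, hξ, rfl⟩ := cs.exists_isReduced x
  obtain ⟨υ, hυ, rfl⟩ := cs.exists_isReduced y
  rw [← wordProd_append] at h
  obtain ⟨j, hj, hjeq⟩ := cs.exists_eraseIdx_of_isRightDescent h
  rcases lt_or_ge j ξ.length with hlt | hge
  · refine Or.inr ⟨π (ξ.eraseIdx j), ?_, ?_⟩
    · calc ℓ (π (ξ.eraseIdx j)) ≤ (ξ.eraseIdx j).length := cs.length_wordProd_le _
        _ < ξ.length := by rw [length_eraseIdx_of_lt hlt]; omega
        _ = ℓ (π ξ) := hξ.symm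
    · rw [← wordProd_append, hjeq, eraseIdx_append_of_lt_length hlt, wordProd_append]
  · left
    rw [eraseIdx_append_of_length_le hge, wordProd_append, wordProd_append, mul_assoc,
      mul_right_inj] at hjeq
    have hj' : j - ξ.length < υ.length := by simp at hj; omega
    unfold IsRightDescent
    calc ℓ (π υ * s k) ≤ (υ.eraseIdx (j - ξ.length)).length := hjeq ▸ cs.length_wordProd_le _
      _ < υ.length := by rw [length_eraseIdx_of_lt hj']; omega
      _ = ℓ (π υ) := hυ.symm

theorem length_mul_eq_add_of_forall_length_le {K : Set B} {m : W}
    (hm : ∀ c ∈ Subgroup.closure (cs.simple '' K), ℓ m ≤ ℓ (m * c)) {c : W}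
    (hc : c ∈ Subgroup.closure (cs.simple '' K)) : ℓ (m * c) = ℓ m + ℓ c := by
  induction hn : ℓ c generalizing c with
  | zero => simp [cs.length_eq_zero_iff.mp hn]
  | succ n ih =>
    obtain ⟨k, hk⟩ := cs.exists_rightDescent_of_ne_one (w := c) (by rintro rfl; simp at hn)
    have hck := mul_mem hc (cs.simple_mem_closure_of_isRightDescent hc hk)
    have hlen : ℓ (c * s k) = n := by have := cs.isRightDescent_iff.mp hk; omega
    have hmul : ℓ (m * (c * s k)) = ℓ m + n := ih hck hlen
    have hback : m * (c * s k) * s k = m * c := by rw [mul_assoc, simple_mul_simple_cancel_right]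
    rcases cs.length_mul_simple (m * (c * s k)) k with hup | hdown
    · rw [hback] at hup
      omega
    · exfalso
      have hdesc : cs.IsRightDescent (m * (c * s k)) k := by
        unfold IsRightDescent
        rw [hback] at hdown ⊢
        omega
      rcases cs.isRightDescent_or_exists_length_lt_of_isRightDescent_mul hdesc with
        hcdesc | ⟨x', hx', hx'eq⟩
      · unfold IsRightDescent at hcdesc
        rw [simple_mul_simple_cancel_right] at hcdesc
        omega
      · have hx'c : x' = m * (c * (c * s k)⁻¹) := by
          rw [← mul_assoc, eq_mul_inv_iff_mul_eq, ← hx'eq, hback]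
        have := hm _ (mul_mem hc (inv_mem hck))
        rw [← hx'c] at this
        omega

/-- Compare `u` with an element `u c₀` of minimal length in `u W_K`. -/
theorem length_mul_eq_add_of_forall_not_isRightDescent {K : Set B} {u : W}
    (hu : ∀ k, s k ∈ Subgroup.closure (cs.simple '' K) → ¬ cs.IsRightDescent u k) {c : W}
    (hc : c ∈ Subgroup.closure (cs.simple '' K)) : ℓ (u * c) = ℓ u + ℓ c := by
  set H := Subgroup.closure (cs.simple '' K)
  obtain ⟨c₀, hc₀, hmin⟩ : ∃ c₀ ∈ H, ∀ c ∈ H, ℓ (u * c₀) ≤ ℓ (u * c₀ * c) := by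
    have hc₀ := Function.argminOn_mem (fun c ↦ ℓ (u * c)) (H : Set W) ⟨1, H.one_mem⟩
    refine ⟨_, hc₀, fun c hc ↦ ?_⟩
    rw [mul_assoc]
    exact Function.argminOn_le (fun c ↦ ℓ (u * c)) (H : Set W) (mul_mem hc₀ hc)
  obtain rfl : c₀ = 1 := by
    by_contra hne
    obtain ⟨k, hk⟩ := cs.exists_rightDescent_of_ne_one (inv_ne_one.mpr hne)
    have hsk := cs.simple_mem_closure_of_isRightDescent (inv_mem hc₀) hk
    have h₁ := cs.length_mul_eq_add_of_forall_length_le hmin (inv_mem hc₀)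
    have h₂ := cs.length_mul_eq_add_of_forall_length_le hmin (mul_mem (inv_mem hc₀) hsk)
    simp only [mul_assoc, mul_inv_cancel_left, mul_inv_cancel, mul_one] at h₁ h₂
    have := cs.isRightDescent_iff.mp hk
    exact hu k hsk (by unfold IsRightDescent; omega)
  simpa using cs.length_mul_eq_add_of_forall_length_le (by simpa using hmin) hc

theorem length_mul_eq_add_of_forall_not_isLeftDescent {J : Set B} {u : W}
    (hu : ∀ j, s j ∈ Subgroup.closure (cs.simple '' J) → ¬ cs.IsLeftDescent u j) {a : W}
    (ha : a ∈ Subgroup.closure (cs.simple '' J)) : ℓ (a * u) = ℓ a + ℓ u := by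
  have := cs.length_mul_eq_add_of_forall_not_isRightDescent (u := u⁻¹)
    (fun k hk h ↦ hu k hk (cs.isRightDescent_inv_iff.mp h)) (inv_mem ha)
  rwa [← mul_inv_rev, length_inv, length_inv, length_inv, add_comm] at this

theorem exists_sublist_wordProd_eq_of_length_mul {ω : List B} {x y : W} (h : π ω = x * y)
    (hxy : ℓ (x * y) = ℓ x + ℓ y) : ∃ ω', ω'.Sublist ω ∧ π ω' = x := by
  induction hn : ℓ y generalizing ω y with
  | zero => exact ⟨ω, Sublist.refl _, by rw [h, cs.length_eq_zero_iff.mp hn, mul_one]⟩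
  | succ n ih =>
    obtain ⟨k, hk⟩ := cs.exists_rightDescent_of_ne_one (w := y) (by rintro rfl; simp at hn)
    have hyk : ℓ (y * s k) = n := by have := cs.isRightDescent_iff.mp hk; omega
    have hle := cs.length_mul_le x (y * s k)
    have hdesc : cs.IsRightDescent (π ω) k := by
      unfold IsRightDescent
      rw [h, mul_assoc]
      omega
    obtain ⟨j, -, hj⟩ := cs.exists_eraseIdx_of_isRightDescent hdesc
    have hadd : ℓ (x * (y * s k)) = ℓ x + ℓ (y * s k) := by
      have := cs.isRightDescent_iff.mp hdesc
      rw [h, mul_assoc] at this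
      omega
    obtain ⟨ω', hsub, hω'⟩ := ih (by rw [← hj, h, mul_assoc]) hadd hyk
    exact ⟨ω', hsub.trans (eraseIdx_sublist ω j), hω'⟩

theorem length_le_length_mul_mul_of_forall_not_isDescent {J K : Set B} {u : W}
    (hJ : ∀ j, s j ∈ Subgroup.closure (cs.simple '' J) → ¬ cs.IsLeftDescent u j)
    (hK : ∀ k, s k ∈ Subgroup.closure (cs.simple '' K) → ¬ cs.IsRightDescent u k) {a b : W}
    (ha : a ∈ Subgroup.closure (cs.simple '' J)) (hb : b ∈ Subgroup.closure (cs.simple '' K)) :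
    ℓ u ≤ ℓ (a * u * b) := by
  obtain ⟨α, hαJ, hα⟩ := cs.mem_closure_simple_iff.mp (inv_mem ha)
  obtain ⟨μ, hμ, hμw⟩ := cs.exists_isReduced (a * u * b)
  have hprod : π (α ++ μ) = u * b := by rw [wordProd_append, hα, ← hμw]; group
  obtain ⟨ω', hsub, hω'⟩ := cs.exists_sublist_wordProd_eq_of_length_mul hprod
    (cs.length_mul_eq_add_of_forall_not_isRightDescent hK hb)
  obtain ⟨A, Y, rfl, hA, hY⟩ := sublist_append_iff.mp hsub
  have hAJ : π A ∈ Subgroup.closure (cs.simple '' J) :=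
    cs.mem_closure_simple_iff.mpr ⟨A, fun i hi ↦ hαJ i (hA.subset hi), rfl⟩
  calc ℓ u ≤ ℓ ((π A)⁻¹ * u) := by
        rw [cs.length_mul_eq_add_of_forall_not_isLeftDescent hJ (inv_mem hAJ)]; omega
    _ = ℓ (π Y) := by rw [← hω', wordProd_append, inv_mul_cancel_left]
    _ ≤ Y.length := cs.length_wordProd_le Y
    _ ≤ μ.length := hY.length_le
    _ = ℓ (a * u * b) := by rw [hμw, hμ]

theorem length_le_length_mul_mul_of_mem_closure {J K L : Set B} {u : W}
    (hu : u ∈ Subgroup.closure (cs.simple '' L))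
    (hmin : ∀ a ∈ Subgroup.closure (cs.simple '' L) ⊓ Subgroup.closure (cs.simple '' J),
      ∀ b ∈ Subgroup.closure (cs.simple '' L) ⊓ Subgroup.closure (cs.simple '' K),
        ℓ u ≤ ℓ (a * u * b))
    {a b : W} (ha : a ∈ Subgroup.closure (cs.simple '' J))
    (hb : b ∈ Subgroup.closure (cs.simple '' K)) : ℓ u ≤ ℓ (a * u * b) := by
  refine cs.length_le_length_mul_mul_of_forall_not_isDescent (fun j hj hdesc ↦ ?_)
    (fun k hk hdesc ↦ ?_) ha hb
  · have := hmin _ ⟨cs.simple_mem_closure_of_isLeftDescent hu hdesc, hj⟩ 1 (one_mem _)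
    rw [mul_one] at this
    exact this.not_gt hdesc
  · have := hmin 1 (one_mem _) _ ⟨cs.simple_mem_closure_of_isRightDescent hu hdesc, hk⟩
    rw [one_mul] at this
    exact this.not_gt hdesc

theorem exists_map_closure_simple_eq {f : W →* W} (hf : ∀ w, ℓ (f w) = ℓ w) (J : Set B) :
    ∃ K : Set B, (Subgroup.closure (cs.simple '' J)).map f = Subgroup.closure (cs.simple '' K) := by
  refine ⟨{k | s k ∈ f '' (cs.simple '' J)}, ?_⟩
  rw [MonoidHom.map_closure]
  congr 1
  ext w
  constructor
  · rintro ⟨_, ⟨i, hi, rfl⟩, rfl⟩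
    obtain ⟨k, hk⟩ := cs.length_eq_one_iff.mp ((hf _).trans (cs.length_simple i))
    exact ⟨k, by rw [Set.mem_ofPred_eq, ← hk]; exact ⟨_, ⟨i, hi, rfl⟩, rfl⟩, hk.symm⟩
  · rintro ⟨k, hk, rfl⟩
    exact hk

theorem map_closure_simple_le {f : W →* W} {J : Set B} (hf : ∀ i ∈ J, ∃ j ∈ J, f (s i) = s j) :
    (Subgroup.closure (cs.simple '' J)).map f ≤ Subgroup.closure (cs.simple '' J) := by
  rw [MonoidHom.map_closure]
  refine Subgroup.closure_mono ?_
  rintro _ ⟨_, ⟨i, hi, rfl⟩, rfl⟩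
  obtain ⟨j, hj, e⟩ := hf i hi
  exact ⟨j, hj, e.symm⟩

end CoxeterSystem

namespace SemidirectProduct

variable {N G : Type*} [Group N] [Group G] {φ : G →* MulAut N}

theorem left_mem_and_right_mem_of_mem_sup {N' : Subgroup N} {G' : Subgroup G}
    (h : ∀ g ∈ G', ∀ n ∈ N', φ g n ∈ N') {x : N ⋊[φ] G}
    (hx : x ∈ N'.map inl ⊔ G'.map inr) : x.left ∈ N' ∧ x.right ∈ G' := by
  let H : Subgroup (N ⋊[φ] G) :=
    { carrier := {x | x.left ∈ N' ∧ x.right ∈ G'}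
      mul_mem' := fun ⟨ha₁, ha₂⟩ ⟨hb₁, hb₂⟩ ↦ ⟨mul_mem ha₁ (h _ ha₂ _ hb₁), mul_mem ha₂ hb₂⟩
      one_mem' := ⟨one_mem _, one_mem _⟩
      inv_mem' := fun ⟨ha₁, ha₂⟩ ↦ ⟨h _ (inv_mem ha₂) _ (inv_mem ha₁), inv_mem ha₂⟩ }
  refine (sup_le ?_ ?_ : _ ≤ H) hx
  · rintro _ ⟨n, hn, rfl⟩
    exact ⟨hn, one_mem _⟩
  · rintro _ ⟨g, hg, rfl⟩
    exact ⟨one_mem _, hg⟩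

theorem left_inl_mul_mul_inl (a b : N) (x : N ⋊[φ] G) :
    (inl a * x * inl b).left = a * x.left * φ x.right b := by
  simp [mul_left]

end SemidirectProduct

/-- STATEMENT 6: With `W₁' = W₁Ω₁` (`Ω₁` stabilizing `S₁`) and
`W_{1,2} = W₁ ∩ W₂`: if `σ ∈ W₁'` is of minimal length in its double coset
`W_{1,2}σW_{1,2}`, then `σ` is of minimal length in its double coset `W₂σW₂`:
`ℓ(w₂σw₂') ≥ ℓ(σ)` for all `w₂, w₂' ∈ W₂`. -/
theorem stmt7 {B : Type*} {M : CoxeterMatrix B} {W : Type*} [Group W]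
    (cs : CoxeterSystem M W) {Ω : Type*} [Group Ω] (φ : Ω →* MulAut W)
    (hφ : ∀ (ρ : Ω) (v : W), cs.length (φ ρ v) = cs.length v)
    (ℓt : W ⋊[φ] Ω → ℕ) (hℓt : ∀ x, ℓt x = cs.length x.left)
    (S₁ S₂ : Set B) (W₁ W₂ : Subgroup W)
    (hW₁ : W₁ = Subgroup.closure (cs.simple '' S₁))
    (hW₂ : W₂ = Subgroup.closure (cs.simple '' S₂))
    (Ω₁ : Subgroup Ω)
    (hΩ₁ : ∀ ρ ∈ Ω₁, ∀ i ∈ S₁, ∃ j ∈ S₁, φ ρ (cs.simple i) = cs.simple j)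
    (W₁' : Subgroup (W ⋊[φ] Ω))
    (hW₁' : W₁' = Subgroup.map (inl : W →* W ⋊[φ] Ω) W₁ ⊔
        Subgroup.map (inr : Ω →* W ⋊[φ] Ω) Ω₁)
    (W₁₂ : Subgroup W) (hW₁₂ : W₁₂ = W₁ ⊓ W₂)
    (σ : W ⋊[φ] Ω) (hσ : σ ∈ W₁')
    (hmin : ∀ a ∈ W₁₂, ∀ b ∈ W₁₂, ℓt σ ≤ ℓt (inl a * σ * inl b)) :
    ∀ w₂ ∈ W₂, ∀ w₂' ∈ W₂, ℓt σ ≤ ℓt (inl w₂ * σ * inl w₂') := by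
  subst hW₁ hW₂ hW₁' hW₁₂
  have hstable : ∀ ρ ∈ Ω₁, ∀ x ∈ Subgroup.closure (cs.simple '' S₁),
      φ ρ x ∈ Subgroup.closure (cs.simple '' S₁) := fun ρ hρ x hx ↦
    cs.map_closure_simple_le (f := (φ ρ).toMonoidHom) (hΩ₁ ρ hρ) ⟨x, hx, rfl⟩
  obtain ⟨hu, hρ⟩ := left_mem_and_right_mem_of_mem_sup hstable hσ
  obtain ⟨K, hK⟩ := cs.exists_map_closure_simple_eq (f := (φ σ.right).toMonoidHom) (hφ σ.right) S₂
  simp only [hℓt, left_inl_mul_mul_inl] at hmin ⊢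
  intro w₂ hw₂ w₂' hw₂'
  refine cs.length_le_length_mul_mul_of_mem_closure hu ?_ hw₂ (hK ▸ Subgroup.mem_map_of_mem _ hw₂')
  rintro a ha b ⟨hb₁, hb⟩
  rw [← hK] at hb
  obtain ⟨b₀, hb₀, rfl⟩ := hb
  have hb₀₁ : b₀ ∈ Subgroup.closure (cs.simple '' S₁) := by
    simpa using hstable _ (inv_mem hρ) _ hb₁
  exact hmin a ha b₀ ⟨hb₀₁, hb₀⟩
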